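/- Nonsmooth AID-FP convergence rate (Theorem 4.1(ii), set-valued form): let 0 ≤ q < 1, L, M ≥ 0, R > 0 and Δ ≥ 0. Let ℬ ⊆ ℝ^{d×(d+m)} be a nonempty bounded set of real block matrices with ‖ℬ₁‖_sup ≤ q, and let 𝒮 ⊆ ℝ^{d×m} be a nonempty bounded set with 𝒮 = ℬ(𝒮). Set δ := 1 if Δ > R and δ := 0 otherwise. Let 𝒜 ⊆ ℝ^{d×(d+m)} be a nonempty bounded set with ‖𝒜₁‖_sup ≤ q and gap(𝒜, ℬ) ≤ (L + (M/R)·δ)·Δ. Define the AID-FP sets by 𝒟⁰ := {0} and 𝒟ᵏ := 𝒜(𝒟^{k−1}) for k ≥ 1. Then for every k ≥ 1, with B := ‖ℬ₂‖_sup: gap(𝒟ᵏ, 𝒮) ≤ (B/(1−q))·qᵏ + ((B+1)/(1−q))·(L + (M/R)·δ)·((1−qᵏ)/(1−q))·Δ. -/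

import Mathlib

/-!
For fixed `[A₁, A₂]` the map `X ↦ A₁ X + A₂` is a `‖A₁‖`-contraction, and replacing `[A₁, A₂]` by
`[B₁, B₂]` moves its value at `S` by at most `‖A - B‖ (‖S‖ + 1)`. Comparing a point `A₁ X + A₂`
of `𝒟ᵏ⁺¹` with the point `B₁ S + B₂ ∈ ℬ(𝒮) = 𝒮` built from near-optimal `B ∈ ℬ` and `S ∈ 𝒮` gives
the recursion `gap(𝒟ᵏ⁺¹, 𝒮) ≤ q gap(𝒟ᵏ, 𝒮) + (‖𝒮‖_sup + 1) gap(𝒜, ℬ)`. Unrolling it from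
`gap(𝒟⁰, 𝒮) ≤ ‖𝒮‖_sup` and using `‖𝒮‖_sup ≤ q ‖𝒮‖_sup + ‖ℬ₂‖_sup`, a consequence of
`𝒮 ⊆ ℬ(𝒮)`, gives the bound.
-/

open scoped Matrix.Norms.L2Operator

/-- The excess (gap) of a set `𝒜` over a set `ℬ` in a normed additive group:
`gap 𝒜 ℬ = sup_{A ∈ 𝒜} inf_{B ∈ ℬ} ‖A - B‖`. -/
noncomputable def gap {E : Type*} [NormedAddCommGroup E] (𝒜 ℬ : Set E) : ℝ :=
  ⨆ A : 𝒜, ⨅ B : ℬ, ‖(A : E) - (B : E)‖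

/-- `‖𝒜‖_sup = sup_{A ∈ 𝒜} ‖A‖`. -/
noncomputable def supNorm {E : Type*} [NormedAddCommGroup E] (𝒜 : Set E) : ℝ :=
  ⨆ A : 𝒜, ‖(A : E)‖

/-- First block `A₁ ∈ ℝ^{n×p₁}` of a block matrix `A = [A₁, A₂] ∈ ℝ^{n×(p₁+p₂)}`. -/
def blk1 {n p₁ p₂ : ℕ} (A : Matrix (Fin n) (Fin (p₁ + p₂)) ℝ) :
    Matrix (Fin n) (Fin p₁) ℝ :=
  A.submatrix id (Fin.castAdd p₂)

/-- Second block `A₂ ∈ ℝ^{n×p₂}` of a block matrix `A = [A₁, A₂] ∈ ℝ^{n×(p₁+p₂)}`. -/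
def blk2 {n p₁ p₂ : ℕ} (A : Matrix (Fin n) (Fin (p₁ + p₂)) ℝ) :
    Matrix (Fin n) (Fin p₂) ℝ :=
  A.submatrix id (Fin.natAdd p₁)

/-- The affine action `𝒜(𝒳) = {A₁ X + A₂ | [A₁, A₂] ∈ 𝒜, X ∈ 𝒳}` of a set of block
matrices `𝒜 ⊆ ℝ^{n×(p₁+p₂)}` on a set of matrices `𝒳 ⊆ ℝ^{p₁×p₂}`. -/
def affAct {n p₁ p₂ : ℕ} (𝒜 : Set (Matrix (Fin n) (Fin (p₁ + p₂)) ℝ))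
    (𝒳 : Set (Matrix (Fin p₁) (Fin p₂) ℝ)) : Set (Matrix (Fin n) (Fin p₂) ℝ) :=
  {Y | ∃ A ∈ 𝒜, ∃ X ∈ 𝒳, Y = blk1 A * X + blk2 A}

open Bornology Metric

namespace Matrix

variable {𝕜 : Type*} [RCLike 𝕜] {l m n : Type*} [Fintype l] [Fintype m] [Fintype n]
  [DecidableEq n]

theorem l2_opNorm_submatrix_id_right_le {e : l → m} (he : e.Injective) (A : Matrix m n 𝕜) :
    ‖A.submatrix e id‖ ≤ ‖A‖ := by
  rw [l2_opNorm_def]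
  refine ContinuousLinearMap.opNorm_le_bound _ (norm_nonneg A) fun x => ?_
  refine le_trans ?_ (l2_opNorm_mulVec A x)
  simp only [EuclideanSpace.norm_eq]
  gcongr
  exact (Finset.sum_map Finset.univ ⟨e, he⟩ fun j => ‖(A *ᵥ x.ofLp) j‖ ^ 2).symm.le.trans
    (Finset.sum_le_univ_sum_of_nonneg fun _ => by positivity)

theorem l2_opNorm_submatrix_id_left_le [DecidableEq l] {e : l → n} (he : e.Injective)
    (A : Matrix m n 𝕜) : ‖A.submatrix id e‖ ≤ ‖A‖ := by
  classical
  rw [← l2_opNorm_conjTranspose, conjTranspose_submatrix, ← l2_opNorm_conjTranspose A]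
  exact l2_opNorm_submatrix_id_right_le he Aᴴ

end Matrix

section Gap

variable {E : Type*} [NormedAddCommGroup E] {𝒜 ℬ : Set E}

theorem gap_eq_iSup_infDist (𝒜 ℬ : Set E) : gap 𝒜 ℬ = ⨆ A : 𝒜, infDist (A : E) ℬ := by
  simp only [gap, infDist_eq_iInf, dist_eq_norm]

theorem gap_nonneg : 0 ≤ gap 𝒜 ℬ :=
  gap_eq_iSup_infDist 𝒜 ℬ ▸ Real.iSup_nonneg fun _ => infDist_nonneg

theorem infDist_le_gap (h𝒜 : IsBounded 𝒜) {A : E} (hA : A ∈ 𝒜) : infDist A ℬ ≤ gap 𝒜 ℬ := by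
  obtain ⟨r, hr⟩ := h𝒜.exists_norm_le
  rw [gap_eq_iSup_infDist]
  refine le_ciSup (f := fun A : 𝒜 => infDist (A : E) ℬ) ⟨infDist 0 ℬ + r, ?_⟩ ⟨A, hA⟩
  rintro _ ⟨A', rfl⟩
  calc infDist (A' : E) ℬ ≤ infDist 0 ℬ + dist (A' : E) 0 := infDist_le_infDist_add_dist
    _ ≤ infDist 0 ℬ + r := by rw [dist_zero_right]; gcongr; exact hr _ A'.2

theorem gap_le {c : ℝ} (hc : 0 ≤ c) (h : ∀ A ∈ 𝒜, infDist A ℬ ≤ c) : gap 𝒜 ℬ ≤ c := by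
  rw [gap_eq_iSup_infDist]
  exact Real.iSup_le (fun A => h A A.2) hc

theorem gap_singleton (x : E) (ℬ : Set E) : gap {x} ℬ = infDist x ℬ := by
  simp [gap_eq_iSup_infDist]

theorem supNorm_nonneg : 0 ≤ supNorm 𝒜 :=
  Real.iSup_nonneg fun _ => norm_nonneg _

theorem norm_le_supNorm (h𝒜 : IsBounded 𝒜) {A : E} (hA : A ∈ 𝒜) : ‖A‖ ≤ supNorm 𝒜 := by
  obtain ⟨r, hr⟩ := h𝒜.exists_norm_le
  exact le_ciSup (f := fun A : 𝒜 => ‖(A : E)‖) ⟨r, by rintro _ ⟨A', rfl⟩; exact hr _ A'.2⟩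
    ⟨A, hA⟩

theorem gap_zero_le_supNorm (hℬne : ℬ.Nonempty) (hℬ : IsBounded ℬ) :
    gap {0} ℬ ≤ supNorm ℬ := by
  obtain ⟨B, hB⟩ := hℬne
  rw [gap_singleton]
  calc infDist 0 ℬ ≤ dist 0 B := infDist_le_dist_of_mem hB
    _ = ‖B‖ := dist_zero_left B
    _ ≤ supNorm ℬ := norm_le_supNorm hℬ hB

theorem supNorm_le {c : ℝ} (hc : 0 ≤ c) (h : ∀ A ∈ 𝒜, ‖A‖ ≤ c) : supNorm 𝒜 ≤ c :=
  Real.iSup_le (fun A => h A A.2) hc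

end Gap

section Blocks

variable {n p₁ p₂ : ℕ}

theorem norm_blk1_le (A : Matrix (Fin n) (Fin (p₁ + p₂)) ℝ) : ‖blk1 A‖ ≤ ‖A‖ :=
  Matrix.l2_opNorm_submatrix_id_left_le (Fin.castAdd_injective _ _) A

theorem norm_blk2_le (A : Matrix (Fin n) (Fin (p₁ + p₂)) ℝ) : ‖blk2 A‖ ≤ ‖A‖ :=
  Matrix.l2_opNorm_submatrix_id_left_le (Fin.natAdd_injective _ _) A

theorem blk1_sub (A B : Matrix (Fin n) (Fin (p₁ + p₂)) ℝ) : blk1 (A - B) = blk1 A - blk1 B :=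
  rfl

theorem blk2_sub (A B : Matrix (Fin n) (Fin (p₁ + p₂)) ℝ) : blk2 (A - B) = blk2 A - blk2 B :=
  rfl

theorem Bornology.IsBounded.image_blk1 {𝒜 : Set (Matrix (Fin n) (Fin (p₁ + p₂)) ℝ)}
    (h𝒜 : IsBounded 𝒜) : IsBounded (blk1 '' 𝒜) :=
  (LipschitzWith.of_dist_le_mul (K := 1) fun A B => by
    simpa only [dist_eq_norm, ← blk1_sub, NNReal.coe_one, one_mul] using norm_blk1_le (A - B)
    ).isBounded_image h𝒜

theorem Bornology.IsBounded.image_blk2 {𝒜 : Set (Matrix (Fin n) (Fin (p₁ + p₂)) ℝ)}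
    (h𝒜 : IsBounded 𝒜) : IsBounded (blk2 '' 𝒜) :=
  (LipschitzWith.of_dist_le_mul (K := 1) fun A B => by
    simpa only [dist_eq_norm, ← blk2_sub, NNReal.coe_one, one_mul] using norm_blk2_le (A - B)
    ).isBounded_image h𝒜

theorem norm_blk_affine_le (A : Matrix (Fin n) (Fin (p₁ + p₂)) ℝ) (X : Matrix (Fin p₁) (Fin p₂) ℝ) :
    ‖blk1 A * X + blk2 A‖ ≤ ‖blk1 A‖ * ‖X‖ + ‖A‖ :=
  (norm_add_le _ _).trans (add_le_add (Matrix.l2_opNorm_mul _ _) (norm_blk2_le A))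

theorem norm_blk_affine_sub_le (A B : Matrix (Fin n) (Fin (p₁ + p₂)) ℝ)
    (X S : Matrix (Fin p₁) (Fin p₂) ℝ) :
    ‖(blk1 A * X + blk2 A) - (blk1 B * S + blk2 B)‖ ≤ ‖blk1 A‖ * ‖X - S‖ + ‖A - B‖ * (‖S‖ + 1) :=
  have hsplit : (blk1 A * X + blk2 A) - (blk1 B * S + blk2 B)
      = blk1 A * (X - S) + (blk1 (A - B) * S + blk2 (A - B)) := by
    rw [blk1_sub, blk2_sub, Matrix.sub_mul, Matrix.mul_sub]
    abel
  calc ‖(blk1 A * X + blk2 A) - (blk1 B * S + blk2 B)‖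
      ≤ ‖blk1 A * (X - S)‖ + ‖blk1 (A - B) * S + blk2 (A - B)‖ := hsplit ▸ norm_add_le _ _
    _ ≤ ‖blk1 A‖ * ‖X - S‖ + (‖A - B‖ * ‖S‖ + ‖A - B‖) := by
      gcongr
      · exact Matrix.l2_opNorm_mul _ _
      · exact (norm_blk_affine_le _ _).trans (by gcongr; exact norm_blk1_le _)
    _ = ‖blk1 A‖ * ‖X - S‖ + ‖A - B‖ * (‖S‖ + 1) := by ring

theorem Bornology.IsBounded.affAct {𝒜 : Set (Matrix (Fin n) (Fin (p₁ + p₂)) ℝ)}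
    {𝒳 : Set (Matrix (Fin p₁) (Fin p₂) ℝ)} (h𝒜 : IsBounded 𝒜) (h𝒳 : IsBounded 𝒳) :
    IsBounded (affAct 𝒜 𝒳) := by
  obtain ⟨a, ha0, ha⟩ := h𝒜.exists_pos_norm_le
  obtain ⟨x, hx⟩ := h𝒳.exists_norm_le
  refine isBounded_iff_forall_norm_le.2 ⟨a * x + a, ?_⟩
  rintro _ ⟨A, hA, X, hX, rfl⟩
  calc ‖blk1 A * X + blk2 A‖ ≤ ‖blk1 A‖ * ‖X‖ + ‖A‖ := norm_blk_affine_le A X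
    _ ≤ a * x + a := by
      gcongr
      exacts [(norm_blk1_le A).trans (ha A hA), hx X hX, ha A hA]

end Blocks

section AffineAction

variable {d m : ℕ} {𝒜 ℬ : Set (Matrix (Fin d) (Fin (d + m)) ℝ)}
  {𝒳 𝒮 : Set (Matrix (Fin d) (Fin m) ℝ)}

theorem supNorm_le_of_subset_affAct {q : ℝ} (hq0 : 0 ≤ q) (hq1 : q < 1) (hℬ : IsBounded ℬ)
    (hℬ₁ : ∀ B ∈ ℬ, ‖blk1 B‖ ≤ q) (h𝒮 : IsBounded 𝒮) (hfix : 𝒮 ⊆ affAct ℬ 𝒮) :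
    supNorm 𝒮 ≤ supNorm (blk2 '' ℬ) / (1 - q) := by
  rw [le_div_iff₀ (sub_pos.2 hq1)]
  suffices supNorm 𝒮 ≤ q * supNorm 𝒮 + supNorm (blk2 '' ℬ) by linarith
  refine supNorm_le (add_nonneg (mul_nonneg hq0 supNorm_nonneg) supNorm_nonneg) fun S hS => ?_
  obtain ⟨B, hB, S', hS', rfl⟩ := hfix hS
  calc ‖blk1 B * S' + blk2 B‖ ≤ ‖blk1 B * S'‖ + ‖blk2 B‖ := norm_add_le _ _
    _ ≤ q * supNorm 𝒮 + supNorm (blk2 '' ℬ) := by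
      gcongr
      · exact (Matrix.l2_opNorm_mul _ _).trans
          (mul_le_mul (hℬ₁ B hB) (norm_le_supNorm h𝒮 hS') (norm_nonneg _) hq0)
      · exact norm_le_supNorm hℬ.image_blk2 ⟨B, hB, rfl⟩

theorem infDist_blk_affine_le (hℬ : ℬ.Nonempty) (h𝒮ne : 𝒮.Nonempty) (h𝒮 : IsBounded 𝒮)
    (hfix : affAct ℬ 𝒮 ⊆ 𝒮) (A : Matrix (Fin d) (Fin (d + m)) ℝ)
    (X : Matrix (Fin d) (Fin m) ℝ) :
    infDist (blk1 A * X + blk2 A) 𝒮 ≤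
      ‖blk1 A‖ * infDist X 𝒮 + (supNorm 𝒮 + 1) * infDist A ℬ := by
  have hc : 0 < ‖blk1 A‖ + (supNorm 𝒮 + 1) := by
    have := supNorm_nonneg (𝒜 := 𝒮)
    positivity
  refine le_of_forall_pos_le_add fun ε hε => ?_
  set η := ε / (‖blk1 A‖ + (supNorm 𝒮 + 1))
  have hη : 0 < η := div_pos hε hc
  obtain ⟨S, hS, hXS⟩ := (infDist_lt_iff h𝒮ne).1 (lt_add_of_pos_right (infDist X 𝒮) hη)
  obtain ⟨B, hB, hAB⟩ := (infDist_lt_iff hℬ).1 (lt_add_of_pos_right (infDist A ℬ) hη)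
  rw [dist_eq_norm] at hXS hAB
  calc infDist (blk1 A * X + blk2 A) 𝒮
      ≤ ‖(blk1 A * X + blk2 A) - (blk1 B * S + blk2 B)‖ :=
        dist_eq_norm (blk1 A * X + blk2 A) _ ▸ infDist_le_dist_of_mem (hfix ⟨B, hB, S, hS, rfl⟩)
    _ ≤ ‖blk1 A‖ * ‖X - S‖ + ‖A - B‖ * (‖S‖ + 1) := norm_blk_affine_sub_le A B X S
    _ ≤ ‖blk1 A‖ * (infDist X 𝒮 + η) + (infDist A ℬ + η) * (supNorm 𝒮 + 1) := by
      gcongr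
      · exact add_nonneg infDist_nonneg hη.le
      · exact norm_le_supNorm h𝒮 hS
    _ = ‖blk1 A‖ * infDist X 𝒮 + (supNorm 𝒮 + 1) * infDist A ℬ +
        η * (‖blk1 A‖ + (supNorm 𝒮 + 1)) := by ring
    _ = ‖blk1 A‖ * infDist X 𝒮 + (supNorm 𝒮 + 1) * infDist A ℬ + ε := by
      rw [div_mul_cancel₀ _ hc.ne']

theorem gap_affAct_le {q : ℝ} (hq0 : 0 ≤ q) (h𝒜 : IsBounded 𝒜) (h𝒜₁ : ∀ A ∈ 𝒜, ‖blk1 A‖ ≤ q)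
    (hℬ : ℬ.Nonempty) (h𝒳 : IsBounded 𝒳) (h𝒮ne : 𝒮.Nonempty) (h𝒮 : IsBounded 𝒮)
    (hfix : affAct ℬ 𝒮 ⊆ 𝒮) :
    gap (affAct 𝒜 𝒳) 𝒮 ≤ q * gap 𝒳 𝒮 + (supNorm 𝒮 + 1) * gap 𝒜 ℬ := by
  have := supNorm_nonneg (𝒜 := 𝒮)
  refine gap_le (add_nonneg (mul_nonneg hq0 gap_nonneg) (mul_nonneg (by linarith) gap_nonneg)) ?_
  rintro _ ⟨A, hA, X, hX, rfl⟩
  calc infDist (blk1 A * X + blk2 A) 𝒮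
      ≤ ‖blk1 A‖ * infDist X 𝒮 + (supNorm 𝒮 + 1) * infDist A ℬ :=
        infDist_blk_affine_le hℬ h𝒮ne h𝒮 hfix A X
    _ ≤ q * gap 𝒳 𝒮 + (supNorm 𝒮 + 1) * gap 𝒜 ℬ := by
      gcongr
      exacts [infDist_nonneg, h𝒜₁ A hA, infDist_le_gap h𝒳 hX, infDist_le_gap h𝒜 hA]

end AffineAction

theorem le_pow_mul_add_geom_sum_mul {q c : ℝ} {g : ℕ → ℝ} (hq : 0 ≤ q)
    (hg : ∀ n, g (n + 1) ≤ q * g n + c) (n : ℕ) :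
    g n ≤ q ^ n * g 0 + (∑ i ∈ Finset.range n, q ^ i) * c := by
  induction n with
  | zero => simp
  | succ n ih =>
    calc g (n + 1) ≤ q * g n + c := hg n
      _ ≤ q * (q ^ n * g 0 + (∑ i ∈ Finset.range n, q ^ i) * c) + c := by gcongr
      _ = q ^ (n + 1) * g 0 + (∑ i ∈ Finset.range (n + 1), q ^ i) * c := by
        rw [geom_sum_succ]
        ring

theorem aidfp_rate_general {d m : ℕ} (q L M R Δ : ℝ)
    (hq0 : 0 ≤ q) (hq1 : q < 1)
    (ℬ : Set (Matrix (Fin d) (Fin (d + m)) ℝ))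
    (hℬne : ℬ.Nonempty) (hℬb : Bornology.IsBounded ℬ)
    (hℬ₁ : supNorm (blk1 '' ℬ) ≤ q)
    (𝒮 : Set (Matrix (Fin d) (Fin m) ℝ))
    (h𝒮ne : 𝒮.Nonempty) (h𝒮b : Bornology.IsBounded 𝒮)
    (h𝒮fix : 𝒮 = affAct ℬ 𝒮)
    (𝒜 : Set (Matrix (Fin d) (Fin (d + m)) ℝ))
    (h𝒜b : Bornology.IsBounded 𝒜)
    (h𝒜₁ : supNorm (blk1 '' 𝒜) ≤ q)
    (h𝒜gap : gap 𝒜 ℬ ≤ (L + (M / R) * (if R < Δ then 1 else 0)) * Δ)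
    (𝒟 : ℕ → Set (Matrix (Fin d) (Fin m) ℝ))
    (h𝒟0 : 𝒟 0 = {0})
    (h𝒟succ : ∀ k, 𝒟 (k + 1) = affAct 𝒜 (𝒟 k)) :
    ∀ k : ℕ, 1 ≤ k →
      gap (𝒟 k) 𝒮 ≤
        supNorm (blk2 '' ℬ) / (1 - q) * q ^ k +
          (supNorm (blk2 '' ℬ) + 1) / (1 - q) *
            (L + (M / R) * (if R < Δ then 1 else 0)) * ((1 - q ^ k) / (1 - q)) * Δ := by
  intro k _
  generalize L + M / R * (if R < Δ then 1 else 0) = κ at h𝒜gap ⊢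
  set b := supNorm (blk2 '' ℬ)
  have hB₁ : ∀ B ∈ ℬ, ‖blk1 B‖ ≤ q :=
    fun B hB => (norm_le_supNorm hℬb.image_blk1 ⟨B, hB, rfl⟩).trans hℬ₁
  have hA₁ : ∀ A ∈ 𝒜, ‖blk1 A‖ ≤ q :=
    fun A hA => (norm_le_supNorm h𝒜b.image_blk1 ⟨A, hA, rfl⟩).trans h𝒜₁
  have h𝒟b (n : ℕ) : IsBounded (𝒟 n) := by
    induction n with
    | zero => exact h𝒟0 ▸ isBounded_singleton
    | succ n ih => exact h𝒟succ n ▸ h𝒜b.affAct ih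
  have hrec (n : ℕ) : gap (𝒟 (n + 1)) 𝒮 ≤ q * gap (𝒟 n) 𝒮 + (supNorm 𝒮 + 1) * gap 𝒜 ℬ :=
    h𝒟succ n ▸ gap_affAct_le hq0 h𝒜b hA₁ hℬne (h𝒟b n) h𝒮ne h𝒮b h𝒮fix.symm.subset
  have h𝒮sup : supNorm 𝒮 ≤ b / (1 - q) :=
    supNorm_le_of_subset_affAct hq0 hq1 hℬb hB₁ h𝒮b h𝒮fix.subset
  have h𝒟gap₀ : gap (𝒟 0) 𝒮 ≤ supNorm 𝒮 := h𝒟0 ▸ gap_zero_le_supNorm h𝒮ne h𝒮b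
  have h1q : 0 < 1 - q := sub_pos.2 hq1
  calc gap (𝒟 k) 𝒮
      ≤ q ^ k * gap (𝒟 0) 𝒮 + (∑ i ∈ Finset.range k, q ^ i) * ((supNorm 𝒮 + 1) * gap 𝒜 ℬ) :=
        le_pow_mul_add_geom_sum_mul (g := fun n => gap (𝒟 n) 𝒮) hq0 hrec k
    _ ≤ q ^ k * (b / (1 - q)) +
          (1 - q ^ k) / (1 - q) * ((b / (1 - q) + 1 / (1 - q)) * (κ * Δ)) := by
      rw [geom_sum_eq hq1.ne, ← neg_div_neg_eq, neg_sub, neg_sub]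
      have hb : 0 ≤ b := supNorm_nonneg
      gcongr
      · exact h𝒟gap₀.trans h𝒮sup
      · exact div_nonneg (sub_nonneg.2 (pow_le_one₀ hq0 hq1.le)) h1q.le
      · exact gap_nonneg
      · exact one_le_one_div h1q (by linarith)
    _ = b / (1 - q) * q ^ k + (b + 1) / (1 - q) * κ * ((1 - q ^ k) / (1 - q)) * Δ := by ring

/-- Nonsmooth AID-FP convergence rate (Theorem 4.1(ii), set-valued form). -/
theorem aidfp_rate {d m : ℕ} (q L M R Δ : ℝ)
    (hq0 : 0 ≤ q) (hq1 : q < 1) (hL : 0 ≤ L) (hM : 0 ≤ M) (hR : 0 < R) (hΔ : 0 ≤ Δ)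
    (ℬ : Set (Matrix (Fin d) (Fin (d + m)) ℝ))
    (hℬne : ℬ.Nonempty) (hℬb : Bornology.IsBounded ℬ)
    (hℬ₁ : supNorm (blk1 '' ℬ) ≤ q)
    (𝒮 : Set (Matrix (Fin d) (Fin m) ℝ))
    (h𝒮ne : 𝒮.Nonempty) (h𝒮b : Bornology.IsBounded 𝒮)
    (h𝒮fix : 𝒮 = affAct ℬ 𝒮)
    (𝒜 : Set (Matrix (Fin d) (Fin (d + m)) ℝ))
    (h𝒜ne : 𝒜.Nonempty) (h𝒜b : Bornology.IsBounded 𝒜)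
    (h𝒜₁ : supNorm (blk1 '' 𝒜) ≤ q)
    (h𝒜gap : gap 𝒜 ℬ ≤ (L + (M / R) * (if R < Δ then 1 else 0)) * Δ)
    (𝒟 : ℕ → Set (Matrix (Fin d) (Fin m) ℝ))
    (h𝒟0 : 𝒟 0 = {0})
    (h𝒟succ : ∀ k, 𝒟 (k + 1) = affAct 𝒜 (𝒟 k)) :
    ∀ k : ℕ, 1 ≤ k →
      gap (𝒟 k) 𝒮 ≤
        supNorm (blk2 '' ℬ) / (1 - q) * q ^ k +
          (supNorm (blk2 '' ℬ) + 1) / (1 - q) *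
            (L + (M / R) * (if R < Δ then 1 else 0)) * ((1 - q ^ k) / (1 - q)) * Δ :=
  aidfp_rate_general q L M R Δ hq0 hq1 ℬ hℬne hℬb hℬ₁ 𝒮 h𝒮ne h𝒮b h𝒮fix 𝒜 h𝒜b h𝒜₁ h𝒜gap 𝒟 h𝒟0 h𝒟succ
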